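/- arXiv:2406.19926 — 4 statements merged into one kernel-verified Lean document; each statement's English description precedes it below -/
import Mathlib

section
/- Let (X, dist) be a metric space and k ≥ 1, ε ≥ 0. Let P₁, P₂ be finite weighted subsets of X (with weight functions w₁, w₂ : X → ℝ≥0 of finite support), and suppose Ω₁ (with weight function u₁) is an ε-coreset of P₁ for k-means and Ω₂ (with weight function u₂) is an ε-coreset of P₂ for k-means. Then the weighted union Ω₁ ∪ Ω₂, given by the weight function u₁ + u₂, is an ε-coreset for k-means of the weighted union P₁ ∪ P₂ given by the weight function w₁ + w₂. -/
/-- The `k`-means cost of the weighted point set given by the weight function `w`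
(of finite support) against the set of centers `S`:
`∑_p w(p) · (min_{s ∈ S} dist(p,s))²`. -/
noncomputable def wCost {X : Type*} [MetricSpace X] (w : X → NNReal) (S : Finset X) : ℝ :=
  ∑ᶠ p, (w p : ℝ) * (Metric.infDist p (S : Set X)) ^ 2

/-- `u` is an `ε`-coreset of `w` for `k`-means: for every candidate solution `S`
with `|S| = k`, `|cost(u,S) − cost(w,S)| ≤ ε · cost(w,S)`. -/
def IsCoreset {X : Type*} [MetricSpace X] (k : ℕ) (ε : ℝ) (w u : X → NNReal) : Prop :=
  ∀ S : Finset X, S.card = k → |wCost u S - wCost w S| ≤ ε * wCost w S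

lemma wCost_support_subset {X : Type*} [MetricSpace X] (w : X → NNReal) (S : Finset X) :
    (Function.support fun p => (w p : ℝ) * (Metric.infDist p (S : Set X)) ^ 2) ⊆
      Function.support w := by
  intro p hp
  simp only [Function.mem_support] at hp ⊢
  intro h
  apply hp
  simp [h]

lemma wCost_add {X : Type*} [MetricSpace X] (w₁ w₂ : X → NNReal)
    (hw₁ : (Function.support w₁).Finite) (hw₂ : (Function.support w₂).Finite) (S : Finset X) :
    wCost (fun x => w₁ x + w₂ x) S = wCost w₁ S + wCost w₂ S := by
  unfold wCost
  rw [← finsum_add_distrib (hw₁.subset (wCost_support_subset w₁ S))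
    (hw₂.subset (wCost_support_subset w₂ S))]
  congr 1
  ext p
  push_cast
  ring

lemma wCost_nonneg {X : Type*} [MetricSpace X] (w : X → NNReal) (S : Finset X) :
    0 ≤ wCost w S :=
  finsum_nonneg fun p => mul_nonneg (w p).coe_nonneg (sq_nonneg _)

/-- Coresets are composable under union: if `u₁` is an `ε`-coreset of `w₁` and
`u₂` is an `ε`-coreset of `w₂`, then `u₁ + u₂` is an `ε`-coreset of `w₁ + w₂`. -/
theorem stmt_1 {X : Type*} [MetricSpace X] (k : ℕ) (hk : 1 ≤ k) (ε : ℝ) (hε : 0 ≤ ε)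
    (w₁ w₂ u₁ u₂ : X → NNReal)
    (hw₁ : (Function.support w₁).Finite) (hw₂ : (Function.support w₂).Finite)
    (hu₁ : (Function.support u₁).Finite) (hu₂ : (Function.support u₂).Finite)
    (h₁ : IsCoreset k ε w₁ u₁) (h₂ : IsCoreset k ε w₂ u₂) :
    IsCoreset k ε (fun x => w₁ x + w₂ x) (fun x => u₁ x + u₂ x) := by
  intro S hS
  rw [wCost_add w₁ w₂ hw₁ hw₂ S, wCost_add u₁ u₂ hu₁ hu₂ S]
  have t₁ := h₁ S hS
  have t₂ := h₂ S hS
  calc |wCost u₁ S + wCost u₂ S - (wCost w₁ S + wCost w₂ S)|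
      = |(wCost u₁ S - wCost w₁ S) + (wCost u₂ S - wCost w₂ S)| := by ring_nf
    _ ≤ |wCost u₁ S - wCost w₁ S| + |wCost u₂ S - wCost w₂ S| := abs_add_le _ _
    _ ≤ ε * wCost w₁ S + ε * wCost w₂ S := add_le_add t₁ t₂
    _ = ε * (wCost w₁ S + wCost w₂ S) := by ring
end

section
/- Let (X, dist) be a metric space, let G ⊆ X be a finite set with weights w : G → [1, 2], and let A ⊆ X be a finite set of centers such that G and A satisfy Property 1 (with scalar c_A > 0). Let C and C' be any two clusters of A (sets of points of G assigned to a center of A) that have non-empty intersection with G. Then |C ∩ G| ≤ 16 · |C' ∩ G|. Consequently, if m is the number of centers of A whose cluster intersects G, then every non-empty cluster C satisfies |C ∩ G| ≥ |G| / (16m); in particular, a uniformly random point of G lies in C ∩ G with probability at least 1/(16m). -/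
/-- The cost of the finite weighted set `G` (weights `w`) against the finite
set of centers `S`: `∑_{p ∈ G} w(p) · dist(p, S)²`. -/
noncomputable def grpCost {X : Type*} [MetricSpace X] (w : X → ℝ) (G S : Finset X) : ℝ :=
  ∑ p ∈ G, w p * (Metric.infDist p (S : Set X)) ^ 2

/-- If `G` (with weights in `[1,2]`) and the set of centers `A` satisfy
Property 1 (each point has the same cost up to factor 2, and all non-empty
clusters have the same cost between `c_A` and `8c_A`), then any two non-empty
clusters have sizes within a factor `16` of each other; consequently every
non-empty cluster contains at least a `1/(16m)` fraction of `G`, where `m` is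
the number of centers whose cluster intersects `G`. Here `σ` assigns each point
of `G` to a nearest center of `A`, and the cluster of `a ∈ A` is
`{p ∈ G : σ p = a}`. -/
theorem stmt_6 {X : Type*} [MetricSpace X] [DecidableEq X]
    (G : Finset X) (w : X → ℝ) (hw : ∀ p ∈ G, 1 ≤ w p ∧ w p ≤ 2)
    (A : Finset X) (hAne : A.Nonempty)
    (σ : X → X)
    (hσ : ∀ p ∈ G, σ p ∈ A ∧ dist p (σ p) = Metric.infDist p (A : Set X))
    (hP1 : ∀ p ∈ G, ∀ q ∈ G,
      w p * Metric.infDist p (A : Set X) ^ 2 ≤ 2 * (w q * Metric.infDist q (A : Set X) ^ 2))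
    (c_A : ℝ) (hcA : 0 < c_A)
    (hP2 : ∀ a ∈ A, (G.filter (fun p => σ p = a)).Nonempty →
      c_A ≤ grpCost w (G.filter (fun p => σ p = a)) A ∧
        grpCost w (G.filter (fun p => σ p = a)) A ≤ 8 * c_A) :
    (∀ a ∈ A, ∀ a' ∈ A,
      (G.filter (fun p => σ p = a)).Nonempty → (G.filter (fun p => σ p = a')).Nonempty →
      (G.filter (fun p => σ p = a)).card ≤ 16 * (G.filter (fun p => σ p = a')).card) ∧
    (∀ a ∈ A, (G.filter (fun p => σ p = a)).Nonempty →
      (G.card : ℝ) / (16 * (A.filter (fun a' => (G.filter (fun p => σ p = a')).Nonempty)).card) ≤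
        (G.filter (fun p => σ p = a)).card) := by
  classical
  set f : X → ℝ := fun p => w p * (Metric.infDist p (A : Set X)) ^ 2 with hf
  have hfnn : ∀ p ∈ G, 0 ≤ f p := by
    intro p hp
    exact mul_nonneg (le_trans zero_le_one (hw p hp).1) (sq_nonneg _)
  have key : ∀ a ∈ A, ∀ a' ∈ A,
      (G.filter (fun p => σ p = a)).Nonempty → (G.filter (fun p => σ p = a')).Nonempty →
      (G.filter (fun p => σ p = a)).card ≤ 16 * (G.filter (fun p => σ p = a')).card := by
    intro a ha a' ha' hC hC'
    set C := G.filter (fun p => σ p = a) with hCdef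
    set C' := G.filter (fun p => σ p = a') with hC'def
    have hCG : ∀ p ∈ C, p ∈ G := fun p hp => (Finset.mem_filter.mp hp).1
    have hC'G : ∀ p ∈ C', p ∈ G := fun p hp => (Finset.mem_filter.mp hp).1
    have hsum : ∑ p ∈ C, ∑ q ∈ C', f q ≤ ∑ p ∈ C, ∑ q ∈ C', 2 * f p := by
      refine Finset.sum_le_sum fun p hp => Finset.sum_le_sum fun q hq => ?_
      exact hP1 q (hC'G q hq) p (hCG p hp)
    have hL : ∑ p ∈ C, ∑ q ∈ C', f q = (C.card : ℝ) * grpCost w C' A := by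
      rw [Finset.sum_const]
      simp [grpCost, nsmul_eq_mul, hf]
    have hR : ∑ p ∈ C, ∑ q ∈ C', 2 * f p = 2 * (C'.card : ℝ) * grpCost w C A := by
      rw [grpCost, Finset.mul_sum]
      refine Finset.sum_congr rfl fun p hp => ?_
      rw [Finset.sum_const, nsmul_eq_mul]
      ring
    have h1 : (C.card : ℝ) * grpCost w C' A ≤ 2 * (C'.card : ℝ) * grpCost w C A := by
      rw [← hL, ← hR]; exact hsum
    have h2 := hP2 a ha hC
    have h3 := hP2 a' ha' hC'
    have h4 : (C.card : ℝ) * c_A ≤ 16 * (C'.card : ℝ) * c_A := by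
      calc (C.card : ℝ) * c_A ≤ (C.card : ℝ) * grpCost w C' A := by
            exact mul_le_mul_of_nonneg_left h3.1 (Nat.cast_nonneg _)
        _ ≤ 2 * (C'.card : ℝ) * grpCost w C A := h1
        _ ≤ 2 * (C'.card : ℝ) * (8 * c_A) := by
            exact mul_le_mul_of_nonneg_left h2.2 (by positivity)
        _ = 16 * (C'.card : ℝ) * c_A := by ring
    have h5 : (C.card : ℝ) ≤ 16 * (C'.card : ℝ) := le_of_mul_le_mul_right h4 hcA
    exact_mod_cast h5
  refine ⟨key, ?_⟩
  intro a ha hC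
  set A' := A.filter (fun a' => (G.filter (fun p => σ p = a')).Nonempty) with hA'def
  have haA' : a ∈ A' := Finset.mem_filter.mpr ⟨ha, hC⟩
  have hm : 0 < A'.card := Finset.card_pos.mpr ⟨a, haA'⟩
  have hGeq : G = A'.biUnion (fun a' => G.filter (fun p => σ p = a')) := by
    ext p
    constructor
    · intro hp
      exact Finset.mem_biUnion.mpr ⟨σ p,
        Finset.mem_filter.mpr ⟨(hσ p hp).1, ⟨p, Finset.mem_filter.mpr ⟨hp, rfl⟩⟩⟩,
        Finset.mem_filter.mpr ⟨hp, rfl⟩⟩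
    · intro hp
      obtain ⟨a', _, hp'⟩ := Finset.mem_biUnion.mp hp
      exact (Finset.mem_filter.mp hp').1
  have hdisj : ∀ x ∈ A', ∀ y ∈ A', x ≠ y →
      Disjoint (G.filter (fun p => σ p = x)) (G.filter (fun p => σ p = y)) := by
    intro x _ y _ hxy
    refine Finset.disjoint_left.mpr fun p hpx hpy => ?_
    exact hxy ((Finset.mem_filter.mp hpx).2 ▸ (Finset.mem_filter.mp hpy).2 ▸ rfl)
  have hGcard : G.card = ∑ a' ∈ A', (G.filter (fun p => σ p = a')).card := by
    have h := Finset.card_biUnion hdisj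
    rw [← hGeq] at h
    exact h
  have hbound : G.card ≤ 16 * A'.card * (G.filter (fun p => σ p = a)).card := by
    calc G.card = ∑ a' ∈ A', (G.filter (fun p => σ p = a')).card := hGcard
      _ ≤ ∑ a' ∈ A', 16 * (G.filter (fun p => σ p = a)).card := by
          refine Finset.sum_le_sum fun a' ha' => ?_
          have ha'mem := Finset.mem_filter.mp ha'
          exact key a' ha'mem.1 a ha ha'mem.2 hC
      _ = 16 * A'.card * (G.filter (fun p => σ p = a)).card := by
          rw [Finset.sum_const]; ring
  have hbr : (G.card : ℝ) ≤ 16 * (A'.card : ℝ) * (G.filter (fun p => σ p = a)).card := by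
    exact_mod_cast hbound
  rw [div_le_iff₀ (c := 16 * (A'.card : ℝ)) (mul_pos (by norm_num) (Nat.cast_pos.mpr hm))]
  calc (G.card : ℝ) ≤ 16 * (A'.card : ℝ) * (G.filter (fun p => σ p = a)).card := hbr
    _ = ((G.filter (fun p => σ p = a)).card : ℝ) * (16 * A'.card) := by ring
end

section
/- Let (X, dist) be a metric space, let G ⊆ X be a finite nonempty set with weights w : G → [1, 2], let A, S ⊆ X be finite nonempty sets of centers, let ε ∈ (0, 1], and let n_c ≥ 1. Suppose that every p ∈ G satisfies dist(p, A)² ≤ 2 · cost(G, A) / |G|. Let L ⊆ G be any subset such that every p ∈ L satisfies dist(p, S)² ≤ (8/ε)² · dist(p, A)². Then Σ_{p∈L} (1/|G|) · ( w(p) · (|G|/n_c) · dist(p, S)² )² ≤ (512 / (n_c² ε²)) · cost(G, A) · cost(G, S). (This bounds the second moment E[X_i²] of the estimator X_i used in the uniform-sampling coreset analysis, where X_i equals w(p)·(|G|/n_c)·dist(p,S)² when the i-th uniform sample is p ∈ L and 0 otherwise.) -/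
/-- Second-moment bound for the uniform-sampling estimator: if every point of
`G` has `dist(p,A)² ≤ 2·cost(G,A)/|G|` and every `p ∈ L ⊆ G` satisfies
`dist(p,S)² ≤ (8/ε)²·dist(p,A)²`, then
`∑_{p∈L} (1/|G|)·(w(p)·(|G|/n_c)·dist(p,S)²)² ≤ (512/(n_c²ε²))·cost(G,A)·cost(G,S)`. -/
theorem stmt_7 {X : Type*} [MetricSpace X]
    (G : Finset X) (hG : G.Nonempty) (w : X → ℝ) (hw : ∀ p ∈ G, 1 ≤ w p ∧ w p ≤ 2)
    (A S : Finset X) (hA : A.Nonempty) (hS : S.Nonempty)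
    (ε : ℝ) (hε : ε ∈ Set.Ioc (0 : ℝ) 1) (n_c : ℕ) (hnc : 1 ≤ n_c)
    (havg : ∀ p ∈ G,
      Metric.infDist p (A : Set X) ^ 2 ≤ 2 * grpCost w G A / (G.card : ℝ))
    (L : Finset X) (hL : L ⊆ G)
    (hLS : ∀ p ∈ L,
      Metric.infDist p (S : Set X) ^ 2 ≤ (8 / ε) ^ 2 * Metric.infDist p (A : Set X) ^ 2) :
    ∑ p ∈ L, (1 / (G.card : ℝ)) *
        (w p * ((G.card : ℝ) / (n_c : ℝ)) * Metric.infDist p (S : Set X) ^ 2) ^ 2 ≤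
      (512 / ((n_c : ℝ) ^ 2 * ε ^ 2)) * grpCost w G A * grpCost w G S := by
  have hε0 : 0 < ε := hε.1
  have hg0 : 0 < (G.card : ℝ) := by exact_mod_cast hG.card_pos
  have hn0 : 0 < (n_c : ℝ) := by exact_mod_cast hnc
  have hcA : 0 ≤ grpCost w G A := Finset.sum_nonneg fun p hp =>
    mul_nonneg (le_trans zero_le_one (hw p hp).1) (sq_nonneg _)
  have hcS : 0 ≤ grpCost w G S := Finset.sum_nonneg fun p hp =>
    mul_nonneg (le_trans zero_le_one (hw p hp).1) (sq_nonneg _)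
  set g : ℝ := (G.card : ℝ)
  set cA := grpCost w G A
  calc ∑ p ∈ L, (1 / g) *
        (w p * (g / (n_c : ℝ)) * Metric.infDist p (S : Set X) ^ 2) ^ 2
      ≤ ∑ p ∈ L, (256 / ((n_c : ℝ) ^ 2 * ε ^ 2)) * cA *
          (w p * Metric.infDist p (S : Set X) ^ 2) := by
        apply Finset.sum_le_sum
        intro p hp
        have hpG := hL hp
        set s := Metric.infDist p (S : Set X) ^ 2 with hsdef
        set a := Metric.infDist p (A : Set X) ^ 2 with hadef
        have hs0 : (0:ℝ) ≤ s := sq_nonneg _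
        have ha0 : (0:ℝ) ≤ a := sq_nonneg _
        have hw1 := (hw p hpG).1
        have hw2 := (hw p hpG).2
        have h1 : s ≤ (8 / ε) ^ 2 * a := hLS p hp
        have h2 : a ≤ 2 * cA / g := havg p hpG
        have h1' : s * ε ^ 2 ≤ 64 * a := by
          have hsq : (8 / ε) ^ 2 * ε ^ 2 = 64 := by
            field_simp
            norm_num
          calc s * ε ^ 2 ≤ (8 / ε) ^ 2 * a * ε ^ 2 :=
                mul_le_mul_of_nonneg_right h1 (sq_nonneg ε)
            _ = (8 / ε) ^ 2 * ε ^ 2 * a := by ring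
            _ = 64 * a := by rw [hsq]
        have h2' : a * g ≤ 2 * cA := by
          have := mul_le_mul_of_nonneg_right h2 hg0.le
          calc a * g ≤ 2 * cA / g * g := this
            _ = 2 * cA := by field_simp
        have hkey : g * s * ε ^ 2 ≤ 128 * cA := by nlinarith
        have hw0 : (0:ℝ) ≤ w p := le_trans zero_le_one hw1
        have hws : (0:ℝ) ≤ w p * s := mul_nonneg hw0 hs0
        have hmain : w p ^ 2 * g * s ^ 2 * ε ^ 2 ≤ 256 * cA * (w p * s) := by
          have hX : w p * s * (g * s * ε ^ 2) ≤ w p * s * (128 * cA) :=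
            mul_le_mul_of_nonneg_left hkey hws
          have hX0 : (0:ℝ) ≤ w p * s * (g * s * ε ^ 2) := by positivity
          have h2X : w p * (w p * s * (g * s * ε ^ 2)) ≤ 2 * (w p * s * (g * s * ε ^ 2)) :=
            mul_le_mul_of_nonneg_right hw2 hX0
          nlinarith [hX, h2X]
        have hne2 : (0:ℝ) < (n_c : ℝ) ^ 2 * ε ^ 2 := by positivity
        have hrhs : 256 / ((n_c : ℝ) ^ 2 * ε ^ 2) * cA * (w p * s)
            = 256 * cA * (w p * s) / ((n_c : ℝ) ^ 2 * ε ^ 2) := by ring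
        have hlhs : 1 / g * (w p * (g / (n_c : ℝ)) * s) ^ 2
            = w p ^ 2 * g ^ 2 * s ^ 2 * ε ^ 2 / (g * ((n_c : ℝ) ^ 2 * ε ^ 2)) := by
          field_simp
        rw [hrhs, hlhs, div_le_div_iff₀ (by positivity) hne2]
        have := mul_le_mul_of_nonneg_right hmain hg0.le
        nlinarith [this]
    _ ≤ ∑ p ∈ G, (256 / ((n_c : ℝ) ^ 2 * ε ^ 2)) * cA *
          (w p * Metric.infDist p (S : Set X) ^ 2) := by
        apply Finset.sum_le_sum_of_subset_of_nonneg hL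
        intro p hp _
        have hw0 : (0:ℝ) ≤ w p := le_trans zero_le_one (hw p hp).1
        positivity
    _ = (256 / ((n_c : ℝ) ^ 2 * ε ^ 2)) * cA * grpCost w G S := by
        rw [grpCost, ← Finset.mul_sum]
    _ ≤ (512 / ((n_c : ℝ) ^ 2 * ε ^ 2)) * cA * grpCost w G S := by
        have h : (256 : ℝ) / ((n_c : ℝ) ^ 2 * ε ^ 2) ≤ 512 / ((n_c : ℝ) ^ 2 * ε ^ 2) := by
          apply div_le_div_of_nonneg_right ?_ ?_ <;> [norm_num; positivity]
        exact mul_le_mul_of_nonneg_right (mul_le_mul_of_nonneg_right h hcA) hcS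
end

section
/- Let (X, dist) be a metric space, let z ≥ 1, let P ⊆ X be a finite nonempty set with weights w : P → ℝ≥0, and let S ⊆ X be a finite nonempty set with |S| = k. Then there exists a set S' ⊆ P with |S'| ≤ k such that cost_z(P, S') ≤ 2^z · cost_z(P, S). In particular, restricting the candidate centers to the input points loses at most a factor 2 for k-median (z = 1) and a factor 4 for k-means (z = 2). -/
/-- Restricting candidate centers to the input points loses at most a factor
`2^z` for `(k,z)`-clustering: for any solution `S` of `k` centers there is
`S' ⊆ P` with `|S'| ≤ k` and `cost_z(P, S') ≤ 2^z · cost_z(P, S)`. -/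
theorem stmt_12 {X : Type*} [MetricSpace X] (z : ℝ) (hz : 1 ≤ z)
    (P : Finset X) (hP : P.Nonempty) (w : X → ℝ) (hw : ∀ p ∈ P, 0 ≤ w p)
    (k : ℕ) (hk : 1 ≤ k) (S : Finset X) (hS : S.Nonempty) (hScard : S.card = k) :
    ∃ S' : Finset X, S' ⊆ P ∧ S'.Nonempty ∧ S'.card ≤ k ∧
      (∑ p ∈ P, w p * Metric.infDist p (S' : Set X) ^ z) ≤
        (2 : ℝ) ^ z * ∑ p ∈ P, w p * Metric.infDist p (S : Set X) ^ z := by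
  -- For each s, pick a nearest point of P.
  classical
  have hproj : ∀ s : X, ∃ q ∈ P, ∀ p ∈ P, dist s q ≤ dist s p := by
    intro s
    obtain ⟨q, hq, hmin⟩ := P.exists_min_image (fun p => dist s p) hP
    exact ⟨q, hq, hmin⟩
  choose f hfP hfmin using hproj
  refine ⟨S.image f, ?_, hS.image f, (Finset.card_image_le).trans_eq hScard, ?_⟩
  · intro q hq
    obtain ⟨s, _, rfl⟩ := Finset.mem_image.mp hq
    exact hfP s
  · rw [Finset.mul_sum]
    apply Finset.sum_le_sum
    intro p hp
    have hSne : (S : Set X).Nonempty := by exact_mod_cast hS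
    obtain ⟨s, hs, hds⟩ := (S.finite_toSet.isCompact).exists_infDist_eq_dist hSne p
    have hsS : s ∈ S := hs
    have h1 : Metric.infDist p ((S.image f : Finset X) : Set X) ≤ 2 * Metric.infDist p (S : Set X) := by
      have hmem : f s ∈ ((S.image f : Finset X) : Set X) := by
        simp only [Finset.coe_image, Set.mem_image]
        exact ⟨s, hs, rfl⟩
      calc Metric.infDist p ((S.image f : Finset X) : Set X) ≤ dist p (f s) :=
            Metric.infDist_le_dist_of_mem hmem
        _ ≤ dist p s + dist s (f s) := dist_triangle _ _ _
        _ ≤ dist p s + dist s p := by linarith [hfmin s p hp]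
        _ = 2 * Metric.infDist p (S : Set X) := by rw [dist_comm s p, hds]; ring
    have h0 : (0:ℝ) ≤ Metric.infDist p ((S.image f : Finset X) : Set X) :=
      Metric.infDist_nonneg
    have h0' : (0:ℝ) ≤ Metric.infDist p (S : Set X) := Metric.infDist_nonneg
    have hz0 : (0:ℝ) ≤ z := le_trans zero_le_one hz
    have hrp : Metric.infDist p ((S.image f : Finset X) : Set X) ^ z ≤
        (2 * Metric.infDist p (S : Set X)) ^ z :=
      Real.rpow_le_rpow h0 h1 hz0
    have hmr : (2 * Metric.infDist p (S : Set X)) ^ z =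
        (2:ℝ) ^ z * Metric.infDist p (S : Set X) ^ z :=
      Real.mul_rpow (by norm_num) h0'
    have := hw p hp
    calc w p * Metric.infDist p ((S.image f : Finset X) : Set X) ^ z
        ≤ w p * ((2:ℝ) ^ z * Metric.infDist p (S : Set X) ^ z) := by
          apply mul_le_mul_of_nonneg_left _ this
          rw [← hmr]; exact hrp
      _ = (2:ℝ) ^ z * (w p * Metric.infDist p (S : Set X) ^ z) := by ring
end
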